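/- The icosian ring 𝕀 is mapped onto itself by the twist map η: η(𝕀) = 𝕀. -/

import Mathlib

open Polynomial Quaternion

noncomputable section

set_option maxRecDepth 8000
set_option synthInstance.maxHeartbeats 1000000
set_option maxHeartbeats 1000000

def f5 : ℚ[X] := X ^ 2 - C 5

instance f5_irred : Fact (Irreducible f5) := ⟨by
  unfold f5
  apply X_pow_sub_C_irreducible_of_prime Nat.prime_two
  intro b hb
  have h5 : Irrational (Real.sqrt 5) := (Nat.prime_five).irrational_sqrt
  have hb' : ((b : ℝ)) ^ 2 = 5 := by exact_mod_cast congrArg (fun q : ℚ => (q : ℝ)) hb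
  have heq : Real.sqrt 5 = |(b : ℝ)| := by
    rw [← hb', Real.sqrt_sq_eq_abs]
  rw [heq] at h5
  exact h5 ⟨|b|, by push_cast; ring⟩⟩

abbrev K : Type := AdjoinRoot f5

instance : Field K := inferInstance
instance : SMul K (Quaternion K) := inferInstance
instance : Algebra K (Quaternion K) := inferInstance

def sqrt5 : K := AdjoinRoot.root f5

lemma sqrt5_sq : sqrt5 ^ 2 = 5 := by
  have key : ∀ p : ℚ[X], p = X ^ 2 - C 5 →
      eval₂ (AdjoinRoot.of f5) (AdjoinRoot.root f5) p = AdjoinRoot.root f5 ^ 2 - 5 := by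
    rintro p rfl
    simp [eval₂_sub, eval₂_pow, eval₂_X, eval₂_C]
  have h := AdjoinRoot.eval₂_root f5
  rw [key f5 rfl, sub_eq_zero] at h
  simpa [sqrt5] using h

def conjK : K →+* K :=
  AdjoinRoot.lift (algebraMap ℚ K) (-sqrt5) (by
    simp only [f5, eval₂_sub, eval₂_pow, eval₂_X, eval₂_C, sub_eq_zero]
    have h : (-sqrt5) ^ 2 = sqrt5 ^ 2 := by ring
    rw [h, sqrt5_sq]
    simp)

def τ : K := (1 + sqrt5) / 2

abbrev ℍK := Quaternion K

def twist (x : ℍK) : ℍK := ⟨conjK x.re, conjK x.imI, conjK x.imK, conjK x.imJ⟩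

def icoB : Fin 4 → ℍK :=
  ![1, ⟨0,1,0,0⟩, ⟨1/2,1/2,1/2,1/2⟩, ⟨(1-τ)/2, τ/2, 0, 1/2⟩]

def Ico : AddSubgroup ℍK :=
  AddSubgroup.closure (Set.range icoB ∪ Set.range fun i => τ • icoB i)

def lB : Fin 4 → ℍK :=
  ![1, ⟨-(1/2),1/2,1/2,1/2⟩, ⟨0,-1,0,0⟩, ⟨0,1/2,(τ-1)/2,-(τ/2)⟩]

def LatA4 : AddSubgroup ℍK := AddSubgroup.closure (Set.range lB)

def LatATau : AddSubgroup ℍK :=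
  AddSubgroup.closure (Set.range lB ∪ Set.range fun i => τ • lB i)

/-! η is an involution that is semilinear over the Galois conjugation of K, so it suffices that it
maps the additive generators `b`, `τ • b` of 𝕀 into 𝕀. It fixes the first three basis vectors and
sends the fourth to `b₂ - b₃`; as conjugation sends τ to `1 - τ` and 𝕀 is stable under
multiplication by τ (because τ² = τ + 1), the images of the `τ • b` lie in 𝕀 as well. -/

lemma conjK_sqrt5 : conjK sqrt5 = -sqrt5 :=
  AdjoinRoot.lift_root _

lemma conjK_involutive : Function.Involutive conjK := by
  have hid : conjK.toRatAlgHom.comp conjK.toRatAlgHom = AlgHom.id ℚ K :=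
    AdjoinRoot.algHom_ext <| by
      change conjK (conjK sqrt5) = sqrt5
      rw [conjK_sqrt5, map_neg, conjK_sqrt5, neg_neg]
  exact fun x => DFunLike.congr_fun hid x

lemma conjK_tau : conjK τ = 1 - τ := by
  rw [τ, map_div₀, map_add, map_one, conjK_sqrt5, map_ofNat]
  ring

lemma tau_mul_self : τ * τ = τ + 1 := by
  rw [τ]
  linear_combination sqrt5_sq / 4

def twistₛₗ : ℍK →ₛₗ[conjK] ℍK where
  toFun := twist
  map_add' _ _ := by ext <;> exact map_add conjK _ _
  map_smul' _ _ := by ext <;> exact map_mul conjK _ _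

lemma twist_involutive : Function.Involutive twist := fun x => by
  ext <;> exact conjK_involutive _

theorem Function.Involutive.image_eq_of_mapsTo {α : Type*} {f : α → α} (hf : f.Involutive)
    {s : Set α} (hs : Set.MapsTo f s s) : f '' s = s :=
  hs.image_subset.antisymm fun x hx => ⟨f x, hs hx, hf x⟩

theorem smul_mem_closure_range_union_smul {R M ι : Type*} [Ring R] [AddCommGroup M] [Module R M]
    {t : R} (ht : t * t = t + 1) (v : ι → M) {x : M}
    (hx : x ∈ AddSubgroup.closure (Set.range v ∪ Set.range fun i => t • v i)) :
    t • x ∈ AddSubgroup.closure (Set.range v ∪ Set.range fun i => t • v i) := by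
  set L := AddSubgroup.closure (Set.range v ∪ Set.range fun i => t • v i)
  have hv (i : ι) : v i ∈ L := AddSubgroup.subset_closure (.inl ⟨i, rfl⟩)
  have htv (i : ι) : t • v i ∈ L := AddSubgroup.subset_closure (.inr ⟨i, rfl⟩)
  suffices L ≤ L.comap (DistribSMul.toAddMonoidHom M t) from this hx
  rw [AddSubgroup.closure_le, Set.union_subset_iff, Set.range_subset_iff, Set.range_subset_iff]
  refine ⟨htv, fun i => ?_⟩
  change t • t • v i ∈ L
  rw [smul_smul, ht, add_smul, one_smul]
  exact add_mem (htv i) (hv i)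

lemma icoB_mem (i : Fin 4) : icoB i ∈ Ico := AddSubgroup.subset_closure (.inl ⟨i, rfl⟩)

lemma twist_icoB_three : twist (icoB 3) = icoB 2 - icoB 3 := by
  ext <;> simp [twist, icoB, conjK_tau, map_ofNat] <;> change _ = _ - _ <;> ring

lemma twist_icoB_mem (i : Fin 4) : twist (icoB i) ∈ Ico := by
  have of_fixed (j : Fin 4) (hj : twist (icoB j) = icoB j) : twist (icoB j) ∈ Ico := by
    rw [hj]; exact icoB_mem j
  fin_cases i
  · exact of_fixed 0 (by ext <;> simp [twist, icoB])
  · exact of_fixed 1 (by ext <;> simp [twist, icoB])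
  · exact of_fixed 2 (by ext <;> simp [twist, icoB, map_ofNat])
  · exact twist_icoB_three ▸ sub_mem (icoB_mem 2) (icoB_mem 3)

lemma mapsTo_twist_ico : Set.MapsTo twist Ico Ico := by
  suffices Ico ≤ Ico.comap twistₛₗ.toAddMonoidHom from fun x hx => this hx
  rw [Ico, AddSubgroup.closure_le, Set.union_subset_iff, Set.range_subset_iff,
    Set.range_subset_iff]
  refine ⟨twist_icoB_mem, fun i => ?_⟩
  change twistₛₗ (τ • icoB i) ∈ Ico
  rw [map_smulₛₗ, conjK_tau, sub_smul, one_smul]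
  exact sub_mem (twist_icoB_mem i)
    (smul_mem_closure_range_union_smul tau_mul_self _ (twist_icoB_mem i))

/-- the twist map maps the icosian ring onto itself. -/
theorem twist_image_icosians : twist '' (Ico : Set ℍK) = (Ico : Set ℍK) :=
  twist_involutive.image_eq_of_mapsTo mapsTo_twist_ico
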